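/- arXiv:2107.01169 — 3 statements merged into one kernel-verified Lean document; each statement's English description precedes it below -/
import Mathlib

section
/- Let q be a prime power, let N ≥ 3, and set s = (q^{N+1}−1)/(q−1), the number of points of the projective space PG(N,q). Suppose that the set of lines of PG(N,q) admits a packing, i.e., a partition of the set of all lines into resolution classes. Then for every integer k with 2 ≤ k ≤ 1 + (q^N−1)/(q−1) there exists a k-server PIR [m,s]-code with m = s + (k−1)·s/(q+1). -/
/-- `G` is the generator matrix of a `k`-server PIR `[m,s]`-code. -/
def IsPIRMatrix (s m k : ℕ) (G : Matrix (Fin s) (Fin m) (ZMod 2)) : Prop :=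
  ∀ i : Fin s, ∃ R : Fin k → Finset (Fin m),
    (Pairwise fun a b => Disjoint (R a) (R b)) ∧
    ∀ a : Fin k, (∑ j ∈ R a, fun r => G r j) = Pi.single i (1 : ZMod 2)

/-- There exists a `k`-server PIR `[m,s]`-code. -/
def ExistsPIRCode (s m k : ℕ) : Prop :=
  ∃ G : Matrix (Fin s) (Fin m) (ZMod 2), IsPIRMatrix s m k G

/-- The lines of `PG(N,q)`, modeled as the two-dimensional linear subspaces of `F^{N+1}`. -/
abbrev ProjLine (F : Type*) [Field F] (N : ℕ) :=
  {W : Submodule F (Fin (N + 1) → F) // Module.finrank F W = 2}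

/-- A point of `PG(N,q)` lies on a line iff its underlying one-dimensional subspace is
contained in the corresponding two-dimensional subspace. -/
def projPointOnLine {F : Type*} [Field F] {N : ℕ}
    (P : Projectivization F (Fin (N + 1) → F)) (L : ProjLine F N) : Prop :=
  P.submodule ≤ L.1

/-- A resolution class: a set of lines such that every point lies on exactly one of them. -/
def IsResolutionClass {F : Type*} [Field F] {N : ℕ} (C : Set (ProjLine F N)) : Prop :=
  ∀ P : Projectivization F (Fin (N + 1) → F), ∃! L, L ∈ C ∧ projPointOnLine P L

/-- A packing of the lines of `PG(N,q)`: a partition of the set of all lines into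
resolution classes. -/
def IsLinePacking {F : Type*} [Field F] {N : ℕ} (Pk : Set (Set (ProjLine F N))) : Prop :=
  (∀ C ∈ Pk, IsResolutionClass C) ∧ ∀ L : ProjLine F N, ∃! C, C ∈ Pk ∧ L ∈ C

/-!
Take as columns of the generator matrix the unit vectors `e_P` of the `s` points of `PG(N,q)`,
followed by the incidence vectors of all lines of `k - 1` resolution classes of the packing.
To recover `e_P`, one server uses the column of `P`; for each chosen class, another server uses
the line `L` of that class through `P` together with the points of `L` other than `P`. Over
`ZMod 2` the column of `L` is the sum of the columns of its points, so these sum to `e_P`. Lines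
through `P` from different classes are distinct and so meet only in `P`: the recovery sets are
disjoint. A resolution class has `s / (q + 1)` lines, and every class contains exactly one line
through a fixed point, so there are `(s - 1) / q = (q ^ N - 1) / (q - 1)` classes to choose from.
-/

open Function Module
open scoped LinearAlgebra.Projectivization

theorem Nat.card_eq_card_mul_of_card_fiber {α β : Type*} [Finite α] [Finite β] (f : α → β)
    {n : ℕ} (h : ∀ b, Nat.card {a // f a = b} = n) : Nat.card α = Nat.card β * n := by
  have := Fintype.ofFinite β
  rw [← Nat.card_congr (Equiv.sigmaFiberEquiv f), Nat.card_sigma,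
    Finset.sum_congr rfl fun b _ => h b, Finset.sum_const, Finset.card_univ, smul_eq_mul,
    Nat.card_eq_fintype_card]

theorem Nat.card_subtype_ne_add_one {α : Type*} [Finite α] (a : α) :
    Nat.card {x // x ≠ a} + 1 = Nat.card α := by
  classical
  rw [← Finite.card_option, Nat.card_congr (Equiv.optionSubtypeNe a)]

instance Submodule.finite_of_finite {R M : Type*} [Semiring R] [AddCommMonoid M] [Module R M]
    [Finite M] : Finite (Submodule R M) :=
  Finite.of_injective _ SetLike.coe_injective

namespace Projectivization

variable {F V : Type*} [Field F] [AddCommGroup V] [Module F V]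

theorem finrank_sup_submodule_eq_two {P Q : ℙ F V} (h : P ≠ Q) :
    finrank F ↥(P.submodule ⊔ Q.submodule) = 2 := by
  rw [submodule_eq, submodule_eq, ← Submodule.span_insert,
    ← Matrix.range_cons_cons_empty _ _ ![],
    finrank_span_eq_card (linearIndependent_pair_iff_ne.2 h), Fintype.card_fin]

theorem card_subtype_submodule_le_of_finrank_eq_two [Finite F] {W : Submodule F V}
    (hW : finrank F W = 2) : Nat.card {P : ℙ F V // P.submodule ≤ W} = Nat.card F + 1 := by
  rw [← card_of_finrank_two F W hW]
  symm
  refine Nat.card_eq_of_bijective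
    (fun P => ⟨map W.subtype W.injective_subtype P, ?_⟩) ⟨?_, ?_⟩
  · induction P using ind with | h v hv =>
    simp [map_mk, submodule_mk, Submodule.span_singleton_le_iff_mem]
  · exact fun P Q h => map_injective _ W.injective_subtype (congrArg Subtype.val h)
  · rintro ⟨P, hP⟩
    have hrep : P.rep ∈ W := hP (by rw [submodule_eq]; exact Submodule.mem_span_singleton_self _)
    refine ⟨mk F ⟨P.rep, hrep⟩ fun h => P.rep_nonzero (congrArg Subtype.val h), ?_⟩
    exact Subtype.ext <| (map_mk _ W.injective_subtype _ _).trans (mk_rep P)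

end Projectivization

def Matrix.HasRecoverySets {σ ι : Type*} [DecidableEq σ] (κ : Type*)
    (G : Matrix σ ι (ZMod 2)) : Prop :=
  ∀ i : σ, ∃ R : κ → Finset ι, Pairwise (Disjoint on R) ∧
    ∀ a, ∑ j ∈ R a, (fun r => G r j) = Pi.single i 1

theorem Matrix.HasRecoverySets.existsPIRCode {σ ι κ : Type*} [Finite σ] [Finite ι] [Finite κ]
    [DecidableEq σ] {G : Matrix σ ι (ZMod 2)} (hG : G.HasRecoverySets κ) :
    ExistsPIRCode (Nat.card σ) (Nat.card ι) (Nat.card κ) := by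
  let eσ := Finite.equivFin σ
  let eι := Finite.equivFin ι
  let eκ := Finite.equivFin κ
  refine ⟨G.reindex eσ eι, fun i => ?_⟩
  obtain ⟨R, hdisj, hsum⟩ := hG (eσ.symm i)
  refine ⟨fun a => (R (eκ.symm a)).map eι.toEmbedding, fun a b hab => ?_, fun a => ?_⟩
  · simpa using hdisj (eκ.symm.injective.ne hab)
  · ext r
    simpa [Finset.sum_apply, Pi.single_apply, eσ.symm_apply_eq] using
      congrFun (hsum (eκ.symm a)) (eσ.symm r)

section IncidenceCode

variable {α β γ : Type*} (inc : α → β → Prop) [DecidableRel inc]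

def incidenceCode [DecidableEq α] (C : γ → Set β) : Matrix α (α ⊕ Σ c, C c) (ZMod 2) :=
  Matrix.fromCols 1 (Matrix.of fun P L => if inc P L.2 then 1 else 0)

variable [DecidableEq α] {C : γ → Set β}

theorem incidenceCode_col_inl (Q : α) :
    (fun r => incidenceCode inc C r (.inl Q)) = Pi.single Q 1 := by
  ext r
  simp [incidenceCode, Matrix.one_apply, Pi.single_apply]

theorem incidenceCode_col_inr [Fintype α] (L : Σ c, C c) :
    (fun r => incidenceCode inc C r (.inr L)) = ∑ Q with inc Q L.2, Pi.single Q 1 := by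
  ext r
  simp [incidenceCode, Finset.sum_apply, Pi.single_apply]

theorem incidenceCode_hasRecoverySets [Fintype α] (hres : ∀ c P, ∃! L, L ∈ C c ∧ inc P L)
    (hdisj : Pairwise (Disjoint on C))
    (hmeet : ∀ {L L'}, L ≠ L' → ∀ {P Q}, inc P L → inc P L' → inc Q L → inc Q L' → P = Q) :
    (incidenceCode inc C).HasRecoverySets (Option γ) := by
  classical
  intro P
  choose L hLC hPL using fun c => (hres c P).exists
  let R : Option γ → Finset (α ⊕ Σ c, C c) := fun o => o.elim {Sum.inl P} fun c =>
    insert (Sum.inr ⟨c, L c, hLC c⟩)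
      (({Q | inc Q (L c)} : Finset α).erase P |>.map Embedding.inl)
  refine ⟨R, ?_, ?_⟩
  · rintro (_ | c) (_ | c') hne
    · exact absurd rfl hne
    · simp [R, onFun]
    · simp [R, onFun]
    · have hcc : c ≠ c' := fun h => hne (congrArg some h)
      have hL : L c ≠ L c' := fun h => Set.disjoint_left.1 (hdisj hcc) (hLC c) (h ▸ hLC c')
      refine Finset.disjoint_left.2 ?_
      rintro (Q | ⟨d, M⟩) hx hx' <;>
        simp only [R, Option.elim_some, Finset.mem_insert, Finset.mem_map, Embedding.inl_apply,
          Finset.mem_erase, Finset.mem_filter, Finset.mem_univ, true_and, Sum.inl.injEq,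
          Sum.inr.injEq, Sigma.mk.injEq, reduceCtorEq, exists_eq_right, and_false, exists_false,
          false_or, or_false] at hx hx'
      · exact hx.1 (hmeet hL (hPL c) (hPL c') hx.2 hx'.2).symm
      · exact hcc (hx.1.symm.trans hx'.1)
  · rintro (_ | c)
    · simp [R, incidenceCode_col_inl]
    · have hP : P ∈ ({Q | inc Q (L c)} : Finset α) := by simpa using hPL c
      simp only [R, Option.elim]
      rw [Finset.sum_insert (by simp), Finset.sum_map, incidenceCode_col_inr]
      simp only [Embedding.inl_apply, incidenceCode_col_inl]
      rw [← Finset.add_sum_erase _ _ hP, add_assoc, ZModModule.add_self, add_zero]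

end IncidenceCode

section Incidence

variable {α β : Type*} (inc : α → β → Prop)

theorem card_eq_card_mul_of_existsUnique_incident [Finite α] {C : Set β} [Finite C] {n : ℕ}
    (hC : ∀ P, ∃! L, L ∈ C ∧ inc P L) (hn : ∀ L ∈ C, Nat.card {P // inc P L} = n) :
    Nat.card α = Nat.card C * n := by
  choose L hLC hPL using fun P => (hC P).exists
  refine Nat.card_eq_card_mul_of_card_fiber (fun P => (⟨L P, hLC P⟩ : C)) fun M => ?_
  rw [← hn M M.2]
  exact Nat.card_congr
    { toFun := fun P => ⟨P, congrArg Subtype.val P.2 ▸ hPL P⟩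
      invFun := fun P => ⟨P, Subtype.ext <| (hC P).unique ⟨hLC P, hPL P⟩ ⟨M.2, P.2⟩⟩
      left_inv := fun _ => rfl
      right_inv := fun _ => rfl }

theorem card_eq_card_incident_of_partition {Pk : Set (Set β)}
    (hres : ∀ C ∈ Pk, ∀ P, ∃! L, L ∈ C ∧ inc P L) (hpart : ∀ L, ∃! C, C ∈ Pk ∧ L ∈ C)
    (P₀ : α) :
    Nat.card Pk = Nat.card {L // inc P₀ L} := by
  choose L hLC hPL using fun C : Pk => (hres C C.2 P₀).exists
  refine Nat.card_eq_of_bijective (fun C => ⟨L C, hPL C⟩) ⟨fun C C' h => ?_, fun M => ?_⟩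
  · have h : L C = L C' := congrArg Subtype.val h
    exact Subtype.ext <| (hpart (L C)).unique ⟨C.2, hLC C⟩ ⟨C'.2, h ▸ hLC C'⟩
  · obtain ⟨C, ⟨hC, hMC⟩, -⟩ := hpart M
    exact ⟨⟨C, hC⟩, Subtype.ext <|
      (hres C hC P₀).unique ⟨hLC ⟨C, hC⟩, hPL ⟨C, hC⟩⟩ ⟨hMC, M.2⟩⟩

end Incidence

section ProjectiveLines

variable {F : Type*} [Field F] {N : ℕ}

theorem eq_of_projPointOnLine {L L' : ProjLine F N} (h : L ≠ L') {P Q : ℙ F (Fin (N + 1) → F)}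
    (hPL : projPointOnLine P L) (hPL' : projPointOnLine P L') (hQL : projPointOnLine Q L)
    (hQL' : projPointOnLine Q L') : P = Q := by
  by_contra hPQ
  simp only [projPointOnLine, ← Submodule.mem_projectivization_iff_submodule_le] at *
  exact h (Subtype.ext (Projectivization.line_unique hPQ _ _ L.2 L'.2 hPL hQL hPL' hQL'))

theorem card_points_on_projLine [Finite F] (L : ProjLine F N) :
    Nat.card {P // projPointOnLine P L} = Nat.card F + 1 :=
  Projectivization.card_subtype_submodule_le_of_finrank_eq_two L.2

def joinLine {P Q : ℙ F (Fin (N + 1) → F)} (h : P ≠ Q) : ProjLine F N :=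
  ⟨P.submodule ⊔ Q.submodule, Projectivization.finrank_sup_submodule_eq_two h⟩

theorem joinLine_eq {P Q : ℙ F (Fin (N + 1) → F)} (h : P ≠ Q) {L : ProjLine F N}
    (hP : projPointOnLine P L) (hQ : projPointOnLine Q L) : joinLine h = L := by
  by_contra hne
  exact h (eq_of_projPointOnLine hne le_sup_left hP le_sup_right hQ)

theorem card_lines_through_mul_add_one [Finite F] (P₀ : ℙ F (Fin (N + 1) → F)) :
    Nat.card {L : ProjLine F N // projPointOnLine P₀ L} * Nat.card F + 1 =
      Nat.card (ℙ F (Fin (N + 1) → F)) := by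
  rw [← Nat.card_subtype_ne_add_one P₀]
  congr 1
  refine (Nat.card_eq_card_mul_of_card_fiber
    (fun P : {P // P ≠ P₀} =>
      (⟨joinLine P.2.symm, le_sup_left⟩ : {L // projPointOnLine P₀ L}))
    fun L => ?_).symm
  have hL := Nat.card_subtype_ne_add_one (⟨P₀, L.2⟩ : {P // projPointOnLine P L.1})
  rw [card_points_on_projLine] at hL
  rw [← Nat.add_right_cancel_iff.1 hL]
  exact Nat.card_congr
    { toFun := fun P => ⟨⟨P.1.1, congrArg (·.1) P.2 ▸ le_sup_right⟩,
        fun h => P.1.2 (congrArg Subtype.val h)⟩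
      invFun := fun P => ⟨⟨P.1.1, fun h => P.2 (Subtype.ext h)⟩,
        Subtype.ext (joinLine_eq (fun h => P.2 (Subtype.ext h.symm)) L.2 P.1.2)⟩
      left_inv := fun _ => rfl
      right_inv := fun _ => rfl }

theorem IsResolutionClass.card_mul [Finite F] {C : Set (ProjLine F N)}
    (hC : IsResolutionClass C) :
    Nat.card C * (Nat.card F + 1) = Nat.card (ℙ F (Fin (N + 1) → F)) :=
  (card_eq_card_mul_of_existsUnique_incident _ hC fun L _ => card_points_on_projLine L).symm

theorem IsLinePacking.card_mul_add_one [Finite F] {Pk : Set (Set (ProjLine F N))}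
    (hPk : IsLinePacking Pk) :
    Nat.card Pk * Nat.card F + 1 = Nat.card (ℙ F (Fin (N + 1) → F)) := by
  rw [card_eq_card_incident_of_partition _ hPk.1 hPk.2
    (Projectivization.mk F (Pi.single 0 1) (by simp))]
  exact card_lines_through_mul_add_one _

theorem IsLinePacking.existsPIRCode [Finite F] {Pk : Set (Set (ProjLine F N))}
    (hPk : IsLinePacking Pk) {k t : ℕ} (hk : k ≤ Nat.card Pk)
    (ht : ∀ C ∈ Pk, Nat.card C = t) :
    ExistsPIRCode (Nat.card (ℙ F (Fin (N + 1) → F)))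
      (Nat.card (ℙ F (Fin (N + 1) → F)) + k * t) (k + 1) := by
  classical
  have := Fintype.ofFinite Pk
  have := Fintype.ofFinite (ℙ F (Fin (N + 1) → F))
  obtain ⟨cls⟩ : Nonempty (Fin k ↪ Pk) := Embedding.nonempty_of_card_le <| by
    rwa [Fintype.card_fin, ← Nat.card_eq_fintype_card]
  have hdisj : Pairwise (Disjoint on fun c => (cls c).1) := fun c c' hcc =>
    Set.disjoint_left.2 fun L hL hL' => hcc <| cls.injective <| Subtype.ext <|
      (hPk.2 L).unique ⟨(cls c).2, hL⟩ ⟨(cls c').2, hL'⟩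
  have h := (incidenceCode_hasRecoverySets projPointOnLine (fun c => hPk.1 _ (cls c).2) hdisj
    eq_of_projPointOnLine).existsPIRCode
  rwa [Nat.card_sum, Nat.card_sigma, Finset.sum_congr rfl fun c _ => ht _ (cls c).2,
    Finset.sum_const, Finset.card_univ, Fintype.card_fin, smul_eq_mul, Finite.card_option,
    Nat.card_fin] at h

end ProjectiveLines

theorem pir_code_of_projective_packing_general (q N : ℕ)
    (F : Type*) [Field F] [Fintype F] (hF : Fintype.card F = q)
    (s : ℕ) (hs : s = (q ^ (N + 1) - 1) / (q - 1))
    (hpack : ∃ Pk : Set (Set (ProjLine F N)), IsLinePacking Pk)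
    (k : ℕ) (hk2 : 2 ≤ k) (hk : k ≤ 1 + (q ^ N - 1) / (q - 1)) :
    ExistsPIRCode s (s + (k - 1) * (s / (q + 1))) k := by
  obtain ⟨Pk, hPk⟩ := hpack
  have hqF : Nat.card F = q := Nat.card_eq_fintype_card.trans hF
  have hq2 : 2 ≤ q := hqF ▸ Finite.one_lt_card
  have hs' : s = ∑ i ∈ Finset.range (N + 1), q ^ i := hs.trans (Nat.geomSum_eq hq2 _).symm
  have hpts : Nat.card (ℙ F (Fin (N + 1) → F)) = s := by
    rw [Projectivization.card_of_finrank F _ (Module.finrank_fin_fun F), hqF, hs']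
  have hclass : ∀ C ∈ Pk, Nat.card C = s / (q + 1) := fun C hC => by
    rw [← hpts, ← (hPk.1 C hC).card_mul, hqF, Nat.mul_div_cancel _ (by omega)]
  have hnum : Nat.card Pk = ∑ i ∈ Finset.range N, q ^ i := by
    have h := hPk.card_mul_add_one
    rw [hpts, hqF, hs', Finset.sum_range_succ', pow_zero, Nat.add_right_cancel_iff] at h
    refine Nat.eq_of_mul_eq_mul_right (by omega : 0 < q) (h.trans ?_)
    simp only [Finset.sum_mul, pow_succ]
  rw [← Nat.geomSum_eq hq2] at hk
  obtain ⟨k', rfl⟩ : ∃ k', k = k' + 1 := ⟨k - 1, by omega⟩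
  rw [Nat.add_sub_cancel]
  simpa only [hpts] using hPk.existsPIRCode (k := k') (by omega) hclass

/-- Let `q` be a prime power, `N ≥ 3`, and `s = (q^{N+1}-1)/(q-1)` the
number of points of `PG(N,q)`. If the lines of `PG(N,q)` admit a packing, then for every
`2 ≤ k ≤ 1 + (q^N-1)/(q-1)` there is a `k`-server PIR `[s + (k-1)·s/(q+1), s]`-code. -/
theorem pir_code_of_projective_packing (q N : ℕ) (hq : IsPrimePow q) (hN : 3 ≤ N)
    (F : Type*) [Field F] [Fintype F] (hF : Fintype.card F = q)
    (s : ℕ) (hs : s = (q ^ (N + 1) - 1) / (q - 1))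
    (hpack : ∃ Pk : Set (Set (ProjLine F N)), IsLinePacking Pk)
    (k : ℕ) (hk2 : 2 ≤ k) (hk : k ≤ 1 + (q ^ N - 1) / (q - 1)) :
    ExistsPIRCode s (s + (k - 1) * (s / (q + 1))) k :=
  pir_code_of_projective_packing_general q N F hF s hs hpack k hk2 hk
end

section
/- Let q > 3 be an odd prime power and set s = (q² − q)/2. Then for every integer k with 2 ≤ k ≤ q + 1 there exists a k-server PIR [m,s]-code with m = s + (k−1)(q−1). -/
/-!
Model the affine part of `PG(2,q)` by monic quadratics: the point `(S, P)` is `X² + S X + P`.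
The conic consists of the squares `(X - a)²` and one point at infinity, whose tangent is the line
at infinity; the tangent at `(X - a)²` is `{(S, P) | a² + a S + P = 0}`. So the internal points are
the rootless quadratics, and their complement is the image of the Vieta map `{a, b} ↦ (X-a)(X-b)`,
which leaves `q² - (q+1 choose 2) = (q² - q)/2` internal points.

For `c ∈ F`, the non-tangent lines through the point at infinity of slope `-c` are the level sets
`{X² + S X + P evaluated at c = v}`, `v ≠ 0`: there are `q - 1` of them, and since a monic quadratic
is determined by its values at two points, lines through distinct such points share at most one
internal point. The generator matrix is `[I | A]`, where `A` holds the incidence vectors of these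
lines for `k - 1` distinct values of `c`. The `i`-th unit vector is column `i` itself, and for each
`c` it is the sum of the line through point `i` and the unit columns of the other points on that line.
-/

open Finset Function

def IsPIRGenerator {σ ι : Type*} [DecidableEq σ] (k : ℕ) (G : Matrix σ ι (ZMod 2)) : Prop :=
  ∀ i : σ, ∃ R : Fin k → Finset ι,
    (Pairwise fun a b => Disjoint (R a) (R b)) ∧
    ∀ a : Fin k, (∑ j ∈ R a, fun r => G r j) = Pi.single i (1 : ZMod 2)

section Generator

variable {σ σ' ι ι' : Type*} [DecidableEq σ] [DecidableEq σ'] {k : ℕ}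

theorem IsPIRGenerator.reindex {G : Matrix σ ι (ZMod 2)} (hG : IsPIRGenerator k G)
    (eσ : σ ≃ σ') (eι : ι ≃ ι') : IsPIRGenerator k (Matrix.reindex eσ eι G) := by
  intro i
  obtain ⟨R, hdisj, hsum⟩ := hG (eσ.symm i)
  refine ⟨fun a => (R a).map eι.toEmbedding, fun a b hab => disjoint_map _ |>.2 (hdisj hab),
    fun a => funext fun r => ?_⟩
  have hr := congrFun (hsum a) (eσ.symm r)
  simp only [Finset.sum_apply, Pi.single_apply, eσ.symm.injective.eq_iff] at hr
  simpa [Finset.sum_map, Finset.sum_apply, Pi.single_apply] using hr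

theorem existsPIRCode_of_isPIRGenerator [Fintype σ] [Fintype ι] {G : Matrix σ ι (ZMod 2)}
    (hG : IsPIRGenerator k G) : ExistsPIRCode (Fintype.card σ) (Fintype.card ι) k :=
  ⟨_, hG.reindex (Fintype.equivFin σ) (Fintype.equivFin ι)⟩

end Generator

section Fibers

variable {X B V : Type*} [Fintype X] [DecidableEq X] [DecidableEq B] [DecidableEq V]

def fiberMatrix (f : B → X → V) : Matrix X (B × V) (ZMod 2) :=
  Matrix.of fun x bv => if f bv.1 x = bv.2 then 1 else 0

def fiberRecoverySet (f : B → X → V) (i : X) (b : B) : Finset (X ⊕ B × V) :=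
  insert (Sum.inr (b, f b i)) (({j | j ≠ i ∧ f b j = f b i} : Finset X).map Embedding.inl)

theorem sum_fiberRecoverySet (f : B → X → V) (i : X) (b : B) :
    (∑ j ∈ fiberRecoverySet f i b,
        fun r => Matrix.fromCols (1 : Matrix X X (ZMod 2)) (fiberMatrix f) r j) = Pi.single i 1 := by
  rw [fiberRecoverySet, sum_insert (by simp), sum_map]
  funext r
  simp only [Pi.add_apply, Finset.sum_apply, Embedding.inl_apply, Matrix.fromCols_apply_inl,
    Matrix.fromCols_apply_inr, Matrix.one_apply, fiberMatrix, Matrix.of_apply, sum_ite_eq,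
    mem_filter, mem_univ, true_and]
  by_cases hr : r = i
  · simp [hr]
  · rw [Pi.single_eq_of_ne hr, if_congr (and_iff_right hr) rfl rfl]
    -- off `i`, the line column and the unit columns cancel in characteristic 2
    exact CharTwo.add_self_eq_zero _

theorem inl_notMem_fiberRecoverySet (f : B → X → V) (i : X) (b : B) :
    Sum.inl i ∉ fiberRecoverySet f i b := by
  simp [fiberRecoverySet]

theorem disjoint_fiberRecoverySet {f : B → X → V} {b b' : B} (hb : b ≠ b')
    (hf : Injective fun x => (f b x, f b' x)) (i : X) :
    Disjoint (fiberRecoverySet f i b) (fiberRecoverySet f i b') := by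
  simp only [fiberRecoverySet, disjoint_insert_left, disjoint_insert_right, mem_insert, mem_map,
    Embedding.inl_apply, reduceCtorEq, and_false, exists_false, or_false, Sum.inr.injEq,
    Prod.mk.injEq, hb.symm, false_and, not_false_eq_true, true_and]
  refine disjoint_map _ |>.2 <| disjoint_left.2 fun j hj hj' => ?_
  simp only [mem_filter, mem_univ, true_and] at hj hj'
  exact hj.1 (hf (Prod.ext hj.2 hj'.2))

theorem isPIRGenerator_fromCols_one_fiberMatrix {n : ℕ} (f : Fin n → X → V)
    (hf : Pairwise fun b b' => Injective fun x => (f b x, f b' x)) :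
    IsPIRGenerator (n + 1) (Matrix.fromCols (1 : Matrix X X (ZMod 2)) (fiberMatrix f)) := by
  intro i
  refine ⟨Fin.cases {Sum.inl i} (fiberRecoverySet f i), ?_, ?_⟩
  · intro a a' haa
    induction a using Fin.cases <;> induction a' using Fin.cases
    · exact absurd rfl haa
    · exact disjoint_singleton_left.2 (inl_notMem_fiberRecoverySet f i _)
    · exact disjoint_singleton_right.2 (inl_notMem_fiberRecoverySet f i _)
    · have hb := fun h => haa (congrArg Fin.succ h)
      exact disjoint_fiberRecoverySet hb (hf hb) i
  · intro a
    induction a using Fin.cases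
    · funext r
      simp [Matrix.one_apply, Pi.single_apply, eq_comm]
    · exact sum_fiberRecoverySet f i _

end Fibers

section Quadratics

variable {F : Type*} [Field F]

def monicQuadEval (x : F × F) (c : F) : F :=
  c ^ 2 + x.1 * c + x.2

theorem injective_monicQuadEval_pair {c c' : F} (hc : c ≠ c') :
    Injective fun x : F × F => (monicQuadEval x c, monicQuadEval x c') := by
  intro x y hxy
  simp only [monicQuadEval, Prod.mk.injEq] at hxy
  obtain ⟨h, h'⟩ := hxy
  have hS : x.1 = y.1 := by
    have : (c - c') * (x.1 - y.1) = 0 := by linear_combination h - h'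
    simpa [sub_eq_zero, hc] using this
  exact Prod.ext hS (by linear_combination h - c * hS)

def vieta : Sym2 F → F × F :=
  Sym2.lift ⟨fun a b => (-(a + b), a * b), fun a b => by simp only [add_comm, mul_comm]⟩

theorem monicQuadEval_vieta (a b c : F) : monicQuadEval (vieta s(a, b)) c = (c - a) * (c - b) := by
  simp only [vieta, Sym2.lift_mk, monicQuadEval]
  ring

theorem vieta_injective : Injective (vieta (F := F)) := by
  intro z w h
  induction z using Sym2.inductionOn with | _ a b => ?_
  induction w using Sym2.inductionOn with | _ a' b' => ?_
  have hsum : a + b = a' + b' := neg_inj.1 (congrArg Prod.fst h)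
  have hroot : (a' - a) * (a' - b) = 0 := by
    simpa [monicQuadEval_vieta] using congrArg (monicQuadEval · a') h
  rcases mul_eq_zero.1 hroot with ha | ha <;> obtain rfl := sub_eq_zero.1 ha
  · rw [add_left_cancel hsum]
  · rw [add_right_cancel (hsum.trans (add_comm _ _)), Sym2.eq_swap]

variable [Fintype F] [DecidableEq F]

variable (F) in
def internalPoints : Finset (F × F) :=
  {x | ∀ c, monicQuadEval x c ≠ 0}

theorem monicQuadEval_ne_zero {x : F × F} (hx : x ∈ internalPoints F) (c : F) :
    monicQuadEval x c ≠ 0 :=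
  (mem_filter.1 hx).2 c

theorem compl_internalPoints : (internalPoints F)ᶜ = univ.image vieta := by
  ext x
  simp only [internalPoints, compl_filter, mem_filter, mem_univ, true_and, not_forall, not_not,
    mem_image]
  constructor
  · rintro ⟨c, hc⟩
    refine ⟨s(c, -x.1 - c), Prod.ext (by simp [vieta]) ?_⟩
    simp only [vieta, Sym2.lift_mk]
    rw [monicQuadEval] at hc
    linear_combination -hc
  · rintro ⟨z, rfl⟩
    induction z using Sym2.inductionOn with | _ a b => exact ⟨a, by simp [monicQuadEval_vieta]⟩

theorem card_internalPoints :
    (internalPoints F).card = (Fintype.card F ^ 2 - Fintype.card F) / 2 := by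
  set q := Fintype.card F
  have hcompl : (internalPoints F)ᶜ.card = (q + 1) * q / 2 := by
    rw [compl_internalPoints, card_image_of_injective _ vieta_injective, card_univ, Sym2.card,
      Nat.choose_two_right, Nat.add_sub_cancel]
  have hsplit : (internalPoints F).card + (internalPoints F)ᶜ.card = q ^ 2 := by
    rw [card_add_card_compl, Fintype.card_prod, sq]
  have heven : (q + 1) * q % 2 = 0 := Nat.even_iff.1 (mul_comm q _ ▸ Nat.even_mul_succ_self q)
  have hq : (q + 1) * q = q ^ 2 + q := by ring
  omega

def lineValue (c : F) (x : internalPoints F) : Fˣ :=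
  Units.mk0 (monicQuadEval x c) (monicQuadEval_ne_zero x.2 c)

theorem injective_lineValue_pair {c c' : F} (hc : c ≠ c') :
    Injective fun x : internalPoints F => (lineValue c x, lineValue c' x) := by
  intro x y hxy
  simp only [Prod.mk.injEq, Units.ext_iff, lineValue, Units.val_mk0] at hxy
  exact Subtype.ext (injective_monicQuadEval_pair hc (Prod.ext hxy.1 hxy.2))

theorem existsPIRCode_of_field (n : ℕ) (hn : n ≤ Fintype.card F) :
    ExistsPIRCode ((Fintype.card F ^ 2 - Fintype.card F) / 2)
      ((Fintype.card F ^ 2 - Fintype.card F) / 2 + n * (Fintype.card F - 1)) (n + 1) := by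
  obtain ⟨c⟩ : Nonempty (Fin n ↪ F) := Embedding.nonempty_of_card_le (by simpa using hn)
  have hf : Pairwise fun b b' => Injective fun x : internalPoints F =>
      (lineValue (c b) x, lineValue (c b') x) :=
    fun _ _ hb => injective_lineValue_pair (c.injective.ne hb)
  simpa [Fintype.card_units, card_internalPoints] using
    existsPIRCode_of_isPIRGenerator (isPIRGenerator_fromCols_one_fiberMatrix _ hf)

end Quadratics

theorem pir_code_of_internal_points_general (q : ℕ) (hq : IsPrimePow q) (s : ℕ) (hs : s = (q ^ 2 - q) / 2)
    (k : ℕ) (hk2 : 2 ≤ k) (hk : k ≤ q + 1) :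
    ExistsPIRCode s (s + (k - 1) * (q - 1)) k := by
  classical
  obtain ⟨p, n, hp, hn, rfl⟩ := hq
  have : Fact p.Prime := ⟨hp.nat_prime⟩
  let : Fintype (GaloisField p n) := Fintype.ofFinite _
  have hcard : Fintype.card (GaloisField p n) = p ^ n := by
    rw [Fintype.card_eq_nat_card, GaloisField.card p n hn.ne']
  have hcode := existsPIRCode_of_field (F := GaloisField p n) (k - 1) (by omega)
  rwa [hcard, Nat.sub_add_cancel (by omega), ← hs] at hcode

/-- Let `q > 3` be an odd prime power and `s = (q² - q)/2` (the number
of internal points of an irreducible conic in `PG(2,q)`). Then for every `2 ≤ k ≤ q + 1`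
there exists a `k`-server PIR `[m,s]`-code with `m = s + (k-1)(q-1)`. -/
theorem pir_code_of_internal_points (q : ℕ) (hq : IsPrimePow q) (hodd : Odd q)
    (hq3 : 3 < q) (s : ℕ) (hs : s = (q ^ 2 - q) / 2)
    (k : ℕ) (hk2 : 2 ≤ k) (hk : k ≤ q + 1) :
    ExistsPIRCode s (s + (k - 1) * (q - 1)) k :=
  pir_code_of_internal_points_general q hq s hs k hk2 hk
end

section
/- Every (v_t, b_z)-configuration with z ≥ 2 and t ≥ 2 produces, via its dual incidence structure, a (z+1)-server PIR [v+b, b]-code. -/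
/-- A `(v_t, b_z)`-configuration: `v` points, `b` lines (subsets of the point set), each
line has `z` points, each point lies on `t` lines, and two distinct points lie on at most
one common line. -/
structure CombConfig (X : Type*) [DecidableEq X] [Fintype X] (v b t z : ℕ) where
  lines : Finset (Finset X)
  card_points : Fintype.card X = v
  card_lines : lines.card = b
  line_size : ∀ l ∈ lines, l.card = z
  point_degree : ∀ x : X, (lines.filter fun l => x ∈ l).card = t
  two_points : ∀ x y : X, x ≠ y → (lines.filter fun l => x ∈ l ∧ y ∈ l).card ≤ 1

/-- A parallel class: a set of lines partitioning the point set. -/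
def IsParallelClass {X : Type*} [DecidableEq X] [Fintype X]
    (lines C : Finset (Finset X)) : Prop :=
  C ⊆ lines ∧ ∀ x : X, ∃! l, l ∈ C ∧ x ∈ l

/-- A resolution: a partition of the set of lines into parallel classes. -/
def IsResolution {X : Type*} [DecidableEq X] [Fintype X]
    (lines : Finset (Finset X)) (R : Finset (Finset (Finset X))) : Prop :=
  (∀ C ∈ R, IsParallelClass lines C ∧ C.Nonempty) ∧ ∀ l ∈ lines, ∃! C, C ∈ R ∧ l ∈ C

/-! The dual configuration has the `b` lines as its points, so take the systematic generator
matrix `[N | I]`, with `N` the line-by-point incidence matrix. For a line `L`, the identity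
column of `L` is one recovery set, and each of the `z` points `x` on `L` gives another: the
column of `x` together with the identity columns of the other lines through `x`. Over `𝔽₂` these
identity columns cancel every entry of column `x` except the one in row `L`. The sets of two
distinct points `x, y` of `L` could only share a line other than `L` through both `x` and `y`,
which a configuration forbids. -/

theorem existsPIRCode_of_recoverySets {σ ι : Type*} [Fintype σ] [DecidableEq σ] [Fintype ι]
    {κ : σ → Type*} [∀ i, Fintype (κ i)] {s m k : ℕ} (G : Matrix σ ι (ZMod 2))
    (hσ : Fintype.card σ = s) (hι : Fintype.card ι = m) (hκ : ∀ i, Fintype.card (κ i) = k)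
    (R : ∀ i, κ i → Finset ι) (hdisj : ∀ i, Pairwise fun a b => Disjoint (R i a) (R i b))
    (hsum : ∀ i a, ∑ j ∈ R i a, (fun r => G r j) = Pi.single i 1) :
    ExistsPIRCode s m k := by
  let eσ := Fintype.equivFinOfCardEq hσ
  let eι := Fintype.equivFinOfCardEq hι
  refine ⟨Matrix.reindex eσ eι G, fun i => ?_⟩
  let eκ := Fintype.equivFinOfCardEq (hκ (eσ.symm i))
  refine ⟨fun a => (R _ (eκ.symm a)).map eι.toEmbedding, fun a b hab => ?_, fun a => ?_⟩
  · exact (Finset.disjoint_map _).2 (hdisj _ (eκ.symm.injective.ne hab))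
  · have h := congrArg (· ∘ eσ.symm) (hsum _ (eκ.symm a))
    rw [Pi.single_comp_equiv, Equiv.symm_symm, Equiv.apply_symm_apply] at h
    rw [← h]
    funext r
    simp [Finset.sum_map, Finset.sum_apply]

section DualCode

variable {P B : Type*} [Fintype B] [DecidableEq B] (inc : P → B → Prop) [DecidableRel inc]

def incidenceCodeMatrix : Matrix B (P ⊕ B) (ZMod 2) :=
  Matrix.fromCols (Matrix.of fun l x => if inc x l then 1 else 0) 1

def pointRecoverySet (L : B) (x : P) : Finset (P ⊕ B) :=
  ({x} : Finset P).disjSum {l | inc x l ∧ l ≠ L}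

theorem sum_cols_pointRecoverySet {L : B} {x : P} (hx : inc x L) :
    ∑ j ∈ pointRecoverySet inc L x, (fun r => incidenceCodeMatrix inc r j) = Pi.single L 1 := by
  funext r
  rw [Finset.sum_apply, pointRecoverySet, Finset.sum_disjSum, Finset.sum_singleton]
  simp only [incidenceCodeMatrix, Matrix.fromCols_apply_inl, Matrix.fromCols_apply_inr,
    Matrix.of_apply, Matrix.one_apply, Finset.sum_ite_eq, Finset.mem_filter_univ,
    Pi.single_apply]
  by_cases hr : r = L
  · simp [hr, hx]
  · simp only [hr, ne_eq, not_false_eq_true, and_true, if_false]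
    split_ifs <;> decide

theorem disjoint_pointRecoverySet {L : B} {x y : P} (hxy : x ≠ y)
    (hL : ∀ l, inc x l → inc y l → l = L) :
    Disjoint (pointRecoverySet inc L x) (pointRecoverySet inc L y) := by
  rw [Finset.disjoint_left]
  rintro (p | l) hpx hpy <;>
    simp only [pointRecoverySet, Finset.inl_mem_disjSum, Finset.inr_mem_disjSum,
      Finset.mem_singleton, Finset.mem_filter_univ] at hpx hpy
  · exact hxy (hpx.symm.trans hpy)
  · exact hpx.2 (hL l hpx.1 hpy.1)

theorem inr_notMem_pointRecoverySet (L : B) (x : P) : Sum.inr L ∉ pointRecoverySet inc L x := by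
  simp [pointRecoverySet]

def recoverySets (L : B) : Option {x // inc x L} → Finset (P ⊕ B)
  | none => {Sum.inr L}
  | some x => pointRecoverySet inc L x

theorem pairwise_disjoint_recoverySets
    (hinc : ∀ x y l l', x ≠ y → inc x l → inc y l → inc x l' → inc y l' → l = l') (L : B) :
    Pairwise fun a b => Disjoint (recoverySets inc L a) (recoverySets inc L b) := by
  rintro (_ | ⟨x, hx⟩) (_ | ⟨y, hy⟩) hab
  · exact absurd rfl hab
  · exact Finset.disjoint_singleton_left.2 (inr_notMem_pointRecoverySet inc L y)
  · exact Finset.disjoint_singleton_right.2 (inr_notMem_pointRecoverySet inc L x)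
  · have hxy : x ≠ y := fun h => hab (by subst h; rfl)
    exact disjoint_pointRecoverySet inc hxy fun l hxl hyl => hinc x y l L hxy hxl hyl hx hy

theorem sum_cols_recoverySets (L : B) (a : Option {x // inc x L}) :
    ∑ j ∈ recoverySets inc L a, (fun r => incidenceCodeMatrix inc r j) = Pi.single L 1 := by
  rcases a with _ | ⟨x, hx⟩
  · funext r
    simp [recoverySets, incidenceCodeMatrix, Matrix.one_apply, Pi.single_apply]
  · exact sum_cols_pointRecoverySet inc hx

end DualCode

theorem CombConfig.eq_of_mem_of_mem {X : Type*} [DecidableEq X] [Fintype X] {v b t z : ℕ}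
    (cfg : CombConfig X v b t z) {x y : X} {l l' : Finset X} (hxy : x ≠ y)
    (hl : l ∈ cfg.lines) (hl' : l' ∈ cfg.lines) (hxl : x ∈ l) (hyl : y ∈ l)
    (hxl' : x ∈ l') (hyl' : y ∈ l') : l = l' :=
  Finset.card_le_one.1 (cfg.two_points x y hxy) l (by simp [hl, hxl, hyl]) l'
    (by simp [hl', hxl', hyl'])

theorem pir_code_of_dual_configuration_general {X : Type*} [DecidableEq X] [Fintype X]
    (v b t z : ℕ) (cfg : CombConfig X v b t z) :
    ExistsPIRCode b (v + b) (z + 1) := by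
  refine existsPIRCode_of_recoverySets (κ := fun L => Option {x // x ∈ L.1})
    (incidenceCodeMatrix fun (x : X) (l : cfg.lines) => x ∈ l.1) ?_ ?_ ?_ (recoverySets _)
    (pairwise_disjoint_recoverySets _ ?_) (sum_cols_recoverySets _)
  · rw [Fintype.card_coe, cfg.card_lines]
  · rw [Fintype.card_sum, Fintype.card_coe, cfg.card_points, cfg.card_lines]
  · intro L
    rw [Fintype.card_option, Fintype.card_coe, cfg.line_size L L.2]
  · intro x y l l' hxy hxl hyl hxl' hyl'
    exact Subtype.ext (cfg.eq_of_mem_of_mem hxy l.2 l'.2 hxl hyl hxl' hyl')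

/-- Every `(v_t, b_z)`-configuration with `z ≥ 2` and `t ≥ 2`
produces, via its dual incidence structure, a `(z+1)`-server PIR `[v+b, b]`-code. -/
theorem pir_code_of_dual_configuration {X : Type*} [DecidableEq X] [Fintype X]
    (v b t z : ℕ) (cfg : CombConfig X v b t z) (hz : 2 ≤ z) (ht : 2 ≤ t) :
    ExistsPIRCode b (v + b) (z + 1) :=
  pir_code_of_dual_configuration_general v b t z cfg
end
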